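/- arXiv:0906.3363 — 9 statements merged into one kernel-verified Lean document; each statement's English description precedes it below -/
import Mathlib

section
/- Let R and H be complex matrices with H Hermitian, and let R_⊥ be an injective matrix whose range equals the kernel of R. Then there exists μ > 0 such that μ · R* R - H is positive definite if and only if R_⊥* H R_⊥ is negative definite. -/
/-!
If `μ • Rᴴ R - H` is positive definite, compressing it by `Rp` kills `Rᴴ R` (as `R Rp = 0`) and
leaves `-(Rpᴴ H Rp)`, still positive definite since `Rp` is injective. Conversely, the open sets
`{x | xᴴ H x < μ xᴴ Rᴴ R x}` increase with `μ` and cover the unit sphere: where `R x ≠ 0` a large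
`μ` works, and where `R x = 0` the vector lies in the range of `Rp`, on which `H` is negative.
By compactness a single `μ` works on the sphere, hence everywhere by homogeneity.
-/

open Matrix
open scoped ComplexOrder

theorem IsCompact.exists_pos_forall_lt_mul {X : Type*} [TopologicalSpace X] {s : Set X}
    (hs : IsCompact s) {f g : X → ℝ} (hf : Continuous f) (hg : Continuous g)
    (hg_nonneg : ∀ x, 0 ≤ g x) (hfg : ∀ x ∈ s, g x = 0 → f x < 0) :
    ∃ μ : ℝ, 0 < μ ∧ ∀ x ∈ s, f x < μ * g x := by
  let U : ℕ → Set X := fun N ↦ {x | f x < (N + 1) * g x}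
  have hU_mono : Monotone U := fun N M hNM x (hx : f x < _) ↦
    hx.trans_le (mul_le_mul_of_nonneg_right (by gcongr) (hg_nonneg x))
  have hs_cover : s ⊆ ⋃ N, U N := by
    intro x hx
    rw [Set.mem_iUnion]
    rcases (hg_nonneg x).eq_or_lt with hzero | hpos
    · exact ⟨0, by simpa [U, ← hzero] using hfg x hx hzero.symm⟩
    · obtain ⟨N, hN⟩ := exists_nat_gt (f x / g x)
      refine ⟨N, ?_⟩
      rw [div_lt_iff₀ hpos] at hN
      show f x < (N + 1) * g x
      linarith
  obtain ⟨N, hN⟩ := hs.elim_directed_cover U (fun N ↦ isOpen_lt hf (continuous_const.mul hg))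
    hs_cover hU_mono.directed_le
  exact ⟨N + 1, N.cast_add_one_pos, hN⟩

namespace Matrix

theorem star_dotProduct_conjTranspose_mul_mul_mulVec {α n k : Type*} [CommSemiring α]
    [StarRing α] [Fintype n] [Fintype k] (B : Matrix n k α) (M : Matrix n n α) (y : k → α) :
    star y ⬝ᵥ (Bᴴ * M * B) *ᵥ y = star (B *ᵥ y) ⬝ᵥ M *ᵥ (B *ᵥ y) := by
  rw [star_mulVec, ← dotProduct_mulVec, mulVec_mulVec, mulVec_mulVec, Matrix.mul_assoc]

variable {𝕜 n : Type*} [RCLike 𝕜] [Fintype n]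

theorem continuous_re_star_dotProduct_mulVec (M : Matrix n n 𝕜) :
    Continuous fun x : n → 𝕜 ↦ RCLike.re (star x ⬝ᵥ M *ᵥ x) :=
  RCLike.continuous_re.comp <|
    continuous_id.star.dotProduct (continuous_const.matrix_mulVec continuous_id)

theorem star_smul_dotProduct_mulVec_smul (M : Matrix n n 𝕜) (c : 𝕜) (x : n → 𝕜) :
    star (c • x) ⬝ᵥ M *ᵥ (c • x) = (star c * c) * (star x ⬝ᵥ M *ᵥ x) := by
  simp only [mulVec_smul, star_smul, smul_dotProduct, dotProduct_smul, smul_eq_mul]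
  ring

theorem IsHermitian.posDef_of_forall_norm_eq_one {M : Matrix n n 𝕜} (hM : M.IsHermitian)
    (h : ∀ x : n → 𝕜, ‖x‖ = 1 → 0 < RCLike.re (star x ⬝ᵥ M *ᵥ x)) : M.PosDef := by
  refine PosDef.of_dotProduct_mulVec_pos hM fun x hx ↦ RCLike.pos_iff.2
    ⟨?_, hM.im_star_dotProduct_mulVec_self x⟩
  have hx' : 0 < ‖x‖ := norm_pos_iff.2 hx
  set u : n → 𝕜 := (‖x‖ : 𝕜)⁻¹ • x
  have hu : ‖u‖ = 1 := by simp [u, norm_smul, hx'.ne']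
  have hxu : x = (‖x‖ : 𝕜) • u := by simp [u, smul_smul, hx'.ne']
  rw [hxu, star_smul_dotProduct_mulVec_smul, RCLike.star_def, RCLike.conj_ofReal,
    ← RCLike.ofReal_mul, RCLike.re_ofReal_mul]
  exact mul_pos (mul_pos hx' hx') (h u hu)

theorem PosSemidef.exists_posDef_smul_sub {A H : Matrix n n 𝕜} (hA : A.PosSemidef)
    (hH : H.IsHermitian) (hker : ∀ x ≠ 0, A *ᵥ x = 0 → RCLike.re (star x ⬝ᵥ H *ᵥ x) < 0) :
    ∃ μ : ℝ, 0 < μ ∧ ((μ : 𝕜) • A - H).PosDef := by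
  have hnull (x : n → 𝕜) (hx : RCLike.re (star x ⬝ᵥ A *ᵥ x) = 0) : A *ᵥ x = 0 :=
    (hA.dotProduct_mulVec_zero_iff x).1 <|
      RCLike.ext (by simpa using hx)
        (by simpa using hA.isHermitian.im_star_dotProduct_mulVec_self x)
  obtain ⟨μ, hμ, hlt⟩ := (isCompact_sphere (0 : n → 𝕜) 1).exists_pos_forall_lt_mul
    (continuous_re_star_dotProduct_mulVec H) (continuous_re_star_dotProduct_mulVec A)
    hA.re_dotProduct_nonneg fun x hx hAx ↦
      hker x (Metric.ne_of_mem_sphere hx one_ne_zero) (hnull x hAx)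
  have hherm : ((μ : 𝕜) • A - H).IsHermitian := (hA.isHermitian.smul (RCLike.conj_ofReal μ)).sub hH
  refine ⟨μ, hμ, hherm.posDef_of_forall_norm_eq_one fun x hx ↦ ?_⟩
  have := hlt x (mem_sphere_zero_iff_norm.2 hx)
  simp only [sub_mulVec, smul_mulVec, dotProduct_sub, dotProduct_smul, map_sub, smul_eq_mul,
    RCLike.re_ofReal_mul]
  linarith

end Matrix

/-- **Finsler's lemma.** For a complex matrix `R` and a Hermitian matrix `H`,
with `Rp` an injective matrix whose range equals the kernel of `R`,
there exists `μ > 0` with `μ • Rᴴ R - H` positive definite iff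
`Rpᴴ H Rp` is negative definite. -/
theorem finsler_lemma {m n k : Type*} [Fintype m] [Fintype n] [Fintype k]
    (R : Matrix m n ℂ) (H : Matrix n n ℂ) (hH : H.IsHermitian)
    (Rp : Matrix n k ℂ)
    (hinj : Function.Injective Rp.mulVecLin)
    (hrange : LinearMap.range Rp.mulVecLin = LinearMap.ker R.mulVecLin) :
    (∃ μ : ℝ, 0 < μ ∧ ((μ : ℂ) • (Rᴴ * R) - H).PosDef) ↔
      (-(Rpᴴ * H * Rp)).PosDef := by
  have hRRp : R * Rp = 0 := by
    refine ext_iff_mulVec.2 fun y ↦ ?_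
    have hy : Rp *ᵥ y ∈ LinearMap.ker R.mulVecLin := hrange ▸ ⟨y, rfl⟩
    simpa [mulVec_mulVec] using hy
  constructor
  · rintro ⟨μ, -, hP⟩
    have hcompress : Rpᴴ * ((μ : ℂ) • (Rᴴ * R) - H) * Rp = -(Rpᴴ * H * Rp) := by
      rw [Matrix.mul_sub, Matrix.sub_mul, Matrix.mul_smul, Matrix.smul_mul, ← Matrix.mul_assoc,
        ← conjTranspose_mul, Matrix.mul_assoc, hRRp]
      simp
    exact hcompress ▸ hP.conjTranspose_mul_mul_same hinj
  · intro hneg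
    refine (posSemidef_conjTranspose_mul_self R).exists_posDef_smul_sub hH fun x hx hRx ↦ ?_
    obtain ⟨y, rfl⟩ : x ∈ LinearMap.range Rp.mulVecLin :=
      hrange ▸ (conjTranspose_mul_self_mulVec_eq_zero R x).1 hRx
    have hy : y ≠ 0 := by rintro rfl; simp at hx
    have hneg_form := hneg.re_dotProduct_pos hy
    rw [neg_mulVec, dotProduct_neg, map_neg, neg_pos,
      star_dotProduct_conjTranspose_mul_mul_mulVec] at hneg_form
    exact hneg_form
end

section
/- Let A : X → X and B : U → X be linear maps on finite-dimensional complex inner product spaces. If there exists a positive-definite X₀ with A X₀ A* - X₀ - B B* negative definite, then there exists a state-feedback operator F : X → U such that all eigenvalues of A + B F lie in the open unit disk. -/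
/-!
With `R = X₀ + B Bᴴ` and the feedback `F = -Bᴴ R⁻¹ A`, the closed loop is `A + B F = C A` with
`C = X₀ R⁻¹` invertible, and
`X₀ - (A + B F) X₀ (A + B F)ᴴ = (X₀ - X₀ R⁻¹ X₀) + C (R - A X₀ Aᴴ) Cᴴ`,
a positive semidefinite plus a positive definite matrix. So `X₀` solves the strict Stein
inequality of the closed loop, and testing it against an eigenvector `x` of `(A + B F)ᴴ` with
eigenvalue `conj μ` gives `(1 - |μ|²) xᴴ X₀ x > 0`, whence `|μ| < 1`.
-/

open Matrix
open scoped ComplexOrder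

namespace Matrix

variable {n m : Type*} [Fintype n] [Fintype m]

lemma dotProduct_mul_mul_conjTranspose_mulVec {R : Type*} [CommSemiring R] [StarRing R]
    (M Q : Matrix n n R) (x : n → R) :
    star x ⬝ᵥ (M * Q * Mᴴ) *ᵥ x = star (Mᴴ *ᵥ x) ⬝ᵥ Q *ᵥ (Mᴴ *ᵥ x) := by
  simp only [star_mulVec, conjTranspose_conjTranspose, dotProduct_mulVec, vecMul_vecMul,
    mulVec_mulVec, Matrix.mul_assoc]

variable [DecidableEq n]

lemma exists_conjTranspose_mulVec_eq_star_smul {K : Type*} [Field K] [StarRing K]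
    {M : Matrix n n K} {μ : K} (hμ : μ ∈ spectrum K M) : ∃ x ≠ 0, Mᴴ *ᵥ x = star μ • x := by
  rw [spectrum.mem_iff, Algebra.algebraMap_eq_smul_one, isUnit_iff_isUnit_det,
    isUnit_iff_ne_zero, not_not] at hμ
  obtain ⟨v, hv, hvM⟩ := exists_vecMul_eq_zero_iff.2 hμ
  rw [vecMul_sub, sub_eq_zero, vecMul_smul, vecMul_one] at hvM
  exact ⟨star v, star_ne_zero.2 hv, by rw [← star_vecMul, ← star_smul, ← hvM]⟩

variable {𝕜 : Type*} [RCLike 𝕜]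

theorem norm_lt_one_of_mem_spectrum_of_stein {M Q : Matrix n n 𝕜} (hQ : Q.PosDef)
    (hS : (Q - M * Q * Mᴴ).PosDef) {μ : 𝕜} (hμ : μ ∈ spectrum 𝕜 M) : ‖μ‖ < 1 := by
  obtain ⟨x, hx, hMx⟩ := exists_conjTranspose_mulVec_eq_star_smul hμ
  have hq := hQ.dotProduct_mulVec_pos hx
  have hdecay : 0 < ((1 - ‖μ‖ ^ 2 : ℝ) : 𝕜) * star x ⬝ᵥ Q *ᵥ x := by
    have := hS.dotProduct_mulVec_pos hx
    rw [sub_mulVec, dotProduct_sub, dotProduct_mul_mul_conjTranspose_mulVec, hMx,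
      mulVec_smul, star_smul, dotProduct_smul, smul_dotProduct, smul_eq_mul, smul_eq_mul,
      star_star, ← mul_assoc, RCLike.star_def, RCLike.conj_mul, ← one_sub_mul] at this
    exact_mod_cast this
  rw [RCLike.pos_iff, RCLike.re_ofReal_mul] at hdecay
  have hμ2 : ‖μ‖ ^ 2 < 1 := by
    nlinarith [hdecay.1, (RCLike.pos_iff.1 hq).1]
  exact (sq_lt_one_iff₀ (norm_nonneg μ)).1 hμ2

lemma posSemidef_sub_mul_inv_mul {Q P : Matrix n n 𝕜} (hQ : Q.PosSemidef) (hP : P.PosSemidef)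
    (hR : IsUnit (Q + P)) : (Q - Q * (Q + P)⁻¹ * Q).PosSemidef := by
  set S := (Q + P)⁻¹
  have hRS : (Q + P) * S = 1 := mul_nonsing_inv _ ((isUnit_iff_isUnit_det _).1 hR)
  have hSR : S * (Q + P) = 1 := nonsing_inv_mul _ ((isUnit_iff_isUnit_det _).1 hR)
  have hS : Sᴴ = S := by rw [conjTranspose_nonsing_inv, (hQ.isHermitian.add hP.isHermitian).eq]
  have hsplit : Q - Q * S * Q = (Q * S) * P * (Q * S)ᴴ + (P * S) * Q * (P * S)ᴴ := by
    rw [conjTranspose_mul, conjTranspose_mul, hS, hQ.isHermitian.eq, hP.isHermitian.eq,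
      show P = (Q + P) - Q by abel]
    simp only [mul_sub, sub_mul, mul_assoc, hSR, hRS, mul_one, one_mul]
    abel
  rw [hsplit]
  exact (hP.mul_mul_conjTranspose_same _).add (hQ.mul_mul_conjTranspose_same _)

noncomputable def steinFeedback (Q A : Matrix n n 𝕜) (B : Matrix n m 𝕜) : Matrix m n 𝕜 :=
  -(Bᴴ * (Q + B * Bᴴ)⁻¹ * A)

lemma add_mul_steinFeedback {Q A : Matrix n n 𝕜} {B : Matrix n m 𝕜} (hR : IsUnit (Q + B * Bᴴ)) :
    A + B * steinFeedback Q A B = Q * (Q + B * Bᴴ)⁻¹ * A := by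
  have hRR : (Q + B * Bᴴ) * (Q + B * Bᴴ)⁻¹ = 1 :=
    mul_nonsing_inv _ ((isUnit_iff_isUnit_det _).1 hR)
  calc A + B * steinFeedback Q A B
      = (Q + B * Bᴴ) * (Q + B * Bᴴ)⁻¹ * A - B * Bᴴ * (Q + B * Bᴴ)⁻¹ * A := by
        simp only [steinFeedback, hRR, Matrix.one_mul, Matrix.mul_neg, Matrix.mul_assoc,
          sub_eq_add_neg]
    _ = Q * (Q + B * Bᴴ)⁻¹ * A := by
        rw [Matrix.add_mul, Matrix.add_mul, add_sub_cancel_right]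

lemma posDef_sub_closedLoop_stein {Q A : Matrix n n 𝕜} {B : Matrix n m 𝕜}
    (hQ : Q.PosDef) (hS : (-(A * Q * Aᴴ - Q - B * Bᴴ)).PosDef) :
    (Q - (A + B * steinFeedback Q A B) * Q * (A + B * steinFeedback Q A B)ᴴ).PosDef := by
  set R := Q + B * Bᴴ with hRdef
  have hR : R.PosDef := hQ.add_posSemidef (posSemidef_self_mul_conjTranspose B)
  have hRR : R⁻¹ * R = 1 := nonsing_inv_mul _ ((isUnit_iff_isUnit_det _).1 hR.isUnit)
  have hC : IsUnit (Q * R⁻¹) := hQ.isUnit.mul hR.inv.isUnit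
  have hCR : Q * R⁻¹ * R * (Q * R⁻¹)ᴴ = Q * R⁻¹ * Q := by
    rw [conjTranspose_mul, hR.inv.isHermitian.eq, hQ.isHermitian.eq, Matrix.mul_assoc Q,
      hRR, Matrix.mul_one, Matrix.mul_assoc]
  have hsplit : Q - (A + B * steinFeedback Q A B) * Q * (A + B * steinFeedback Q A B)ᴴ =
      (Q - Q * R⁻¹ * Q) + (Q * R⁻¹) * (-(A * Q * Aᴴ - Q - B * Bᴴ)) * (Q * R⁻¹)ᴴ := by
    rw [add_mul_steinFeedback hR.isUnit, ← hCR, conjTranspose_mul (Q * R⁻¹) A, hRdef]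
    noncomm_ring
  rw [hsplit]
  exact .posSemidef_add
    (posSemidef_sub_mul_inv_mul hQ.posSemidef (posSemidef_self_mul_conjTranspose B) hR.isUnit)
    (hS.mul_mul_conjTranspose_same (vecMul_injective_iff_isUnit.2 hC))

end Matrix

/-- If the Stein inequality `A X₀ A* - X₀ - B B* < 0` has a positive definite
solution `X₀`, then there is a state feedback `F` making `A + B F` stable
(all eigenvalues in the open unit disk). -/
theorem stein_implies_operator_stabilizable {n m : Type*} [Fintype n] [Fintype m]
    [DecidableEq n]
    (A : Matrix n n ℂ) (B : Matrix n m ℂ)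
    (h : ∃ X₀ : Matrix n n ℂ, X₀.PosDef ∧ (-(A * X₀ * Aᴴ - X₀ - B * Bᴴ)).PosDef) :
    ∃ F : Matrix m n ℂ, ∀ μ ∈ spectrum ℂ (A + B * F), ‖μ‖ < 1 := by
  obtain ⟨X₀, hX₀, hStein⟩ := h
  exact ⟨steinFeedback X₀ A B, fun μ hμ =>
    norm_lt_one_of_mem_spectrum_of_stein hX₀ (posDef_sub_closedLoop_stein hX₀ hStein) hμ⟩
end

section
/- Let A : X → X and C : X → Y be linear maps on finite-dimensional complex spaces. If there exists an output-injection operator L : Y → X such that A + LC has spectral radius less than 1, then for every z in the closed unit disk the block column matrix [I - zA; C] is injective. -/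
/-!
A nonzero `x` with `(I - z A) x = 0` and `C x = 0` has `z ≠ 0` and `(A + L C) x = A x = z⁻¹ x`,
so `z⁻¹` lies in the spectrum of `A + L C`; for `‖z‖ ≤ 1` this contradicts `‖z⁻¹‖ < 1`.
-/

open Matrix

namespace Matrix

variable {n m R : Type*} [Fintype n]

theorem injective_mulVec_prod_iff [CommRing R] {p : Type*} (M : Matrix m n R)
    (N : Matrix p n R) :
    Function.Injective (fun x : n → R => (M *ᵥ x, N *ᵥ x)) ↔
      ∀ x, M *ᵥ x = 0 → N *ᵥ x = 0 → x = 0 := by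
  rw [show (fun x : n → R => (M *ᵥ x, N *ᵥ x)) = M.mulVecLin.prod N.mulVecLin from rfl,
    injective_iff_map_eq_zero]
  simp [Prod.ext_iff]

variable [DecidableEq n]

theorem mem_spectrum_of_mulVec_eq_smul [CommRing R] {M : Matrix n n R} {μ : R} {x : n → R}
    (hx : x ≠ 0) (h : M *ᵥ x = μ • x) : μ ∈ spectrum R M := by
  rw [← spectrum_toLin']
  exact (Module.End.hasEigenvalue_of_hasEigenvector
    ⟨Module.End.mem_eigenspace_iff.mpr h, hx⟩).mem_spectrum

theorem add_mul_mulVec_eq_inv_smul [Fintype m] [Field R] {A : Matrix n n R}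
    {C : Matrix m n R} (L : Matrix n m R) {z : R} {x : n → R} (hz : z ≠ 0)
    (hA : (1 - z • A) *ᵥ x = 0) (hC : C *ᵥ x = 0) :
    (A + L * C) *ᵥ x = z⁻¹ • x := by
  have hx : x = z • A *ᵥ x := by
    rwa [sub_mulVec, one_mulVec, smul_mulVec, sub_eq_zero] at hA
  calc (A + L * C) *ᵥ x = A *ᵥ x := by
        rw [add_mulVec, ← mulVec_mulVec, hC, mulVec_zero, add_zero]
    _ = z⁻¹ • (z • A *ᵥ x) := by rw [smul_smul, inv_mul_cancel₀ hz, one_smul]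
    _ = z⁻¹ • x := by rw [← hx]

end Matrix

/-- Operator-detectability implies Hautus-detectability:
if `A + L C` has spectral radius `< 1` for some output injection `L`, then for
every `z` in the closed unit disk the block column `[I - z A; C]` is injective. -/
theorem operator_detectable_implies_hautus {n y : Type*} [Fintype n] [Fintype y]
    [DecidableEq n]
    (A : Matrix n n ℂ) (C : Matrix y n ℂ)
    (h : ∃ L : Matrix n y ℂ, ∀ μ ∈ spectrum ℂ (A + L * C), ‖μ‖ < 1) :
    ∀ z : ℂ, ‖z‖ ≤ 1 →
      Function.Injective (fun x : n → ℂ => ((1 - z • A).mulVec x, C.mulVec x)) := by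
  obtain ⟨L, hL⟩ := h
  intro z hz
  refine (injective_mulVec_prod_iff _ _).mpr fun x hAx hCx => by_contra fun hx => ?_
  have hz0 : z ≠ 0 := by
    rintro rfl
    simp_all
  have hinv := hL _ (mem_spectrum_of_mulVec_eq_smul hx (add_mul_mulVec_eq_inv_smul L hz0 hAx hCx))
  rw [norm_inv] at hinv
  exact ((one_le_inv₀ (norm_pos_iff.mpr hz0)).mpr hz).not_gt hinv
end

section
/- Let A : X → X, C : X → Y be linear maps on finite-dimensional complex inner product spaces. If the Stein inequality A* Y₀ A - Y₀ - C* C < 0 has a positive-definite solution Y₀, then there exists L : Y → X with A + LC having spectral radius less than 1. -/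
open Matrix
open scoped ComplexOrder

/-!
Put `S = Y₀ + C* C`, `T = S⁻¹ Y₀` and `L = -A S⁻¹ C*`, so that `A + L C = A T`. Since `S T = Y₀`,
`Y₀ - (A T)* Y₀ (A T) = (1 - T)* Y₀ (1 - T) + (C T)* (C T) + T* Q T`, where
`Q = -(A* Y₀ A - Y₀ - C* C)`; as `T` is invertible this is positive definite. Thus `Y₀` is a
Lyapunov matrix for `A + L C`, and for an eigenvector `v` with eigenvalue `μ` this reads
`(1 - |μ|²) v* Y₀ v > 0`.
-/

theorem Matrix.exists_mulVec_eq_smul_of_mem_spectrum {K n : Type*} [Field K] [Fintype n]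
    [DecidableEq n] {M : Matrix n n K} {μ : K} (hμ : μ ∈ spectrum K M) :
    ∃ v ≠ 0, M *ᵥ v = μ • v := by
  rw [← spectrum_toLin', ← Module.End.hasEigenvalue_iff_mem_spectrum] at hμ
  obtain ⟨v, hv⟩ := hμ.exists_hasEigenvector
  exact ⟨v, hv.2, by simpa using hv.apply_eq_smul⟩

theorem Matrix.norm_lt_one_of_mem_spectrum_of_posDef_sub {𝕜 n : Type*} [RCLike 𝕜] [Fintype n]
    [DecidableEq n] {P M : Matrix n n 𝕜} (hP : P.PosDef) (hPM : (P - Mᴴ * P * M).PosDef)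
    {μ : 𝕜} (hμ : μ ∈ spectrum 𝕜 M) : ‖μ‖ < 1 := by
  obtain ⟨v, hv0, hMv⟩ := exists_mulVec_eq_smul_of_mem_spectrum hμ
  have hform : star v ⬝ᵥ ((P - Mᴴ * P * M) *ᵥ v) =
      ((1 - ‖μ‖ ^ 2 : ℝ) : 𝕜) * (star v ⬝ᵥ (P *ᵥ v)) := by
    rw [sub_mulVec, dotProduct_sub, ← mulVec_mulVec, ← mulVec_mulVec,
      dotProduct_mulVec (star v) Mᴴ, ← star_mulVec, hMv, star_smul, mulVec_smul,
      smul_dotProduct, dotProduct_smul, smul_eq_mul, smul_eq_mul, ← mul_assoc, RCLike.star_def,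
      RCLike.conj_mul]
    push_cast
    ring
  have hpos := hPM.dotProduct_mulVec_pos hv0
  rw [hform, RCLike.pos_iff, RCLike.re_ofReal_mul] at hpos
  have hPv := (RCLike.pos_iff.mp (hP.dotProduct_mulVec_pos hv0)).1
  have hμ2 : ‖μ‖ ^ 2 < 1 := by nlinarith [hpos.1]
  exact (sq_lt_one_iff₀ (norm_nonneg μ)).mp hμ2

theorem Matrix.add_neg_mul_inv_mul_mul {R n m : Type*} [CommRing R] [Fintype n] [Fintype m]
    [DecidableEq n] (A Y : Matrix n n R) (B : Matrix n m R) (C : Matrix m n R)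
    (h : IsUnit (Y + B * C).det) :
    A + -(A * (Y + B * C)⁻¹ * B) * C = A * ((Y + B * C)⁻¹ * Y) := by
  calc A + -(A * (Y + B * C)⁻¹ * B) * C
      = A * ((Y + B * C)⁻¹ * (Y + B * C)) - A * ((Y + B * C)⁻¹ * (B * C)) := by
        rw [nonsing_inv_mul _ h, Matrix.mul_one]
        simp only [Matrix.mul_assoc, Matrix.neg_mul, sub_eq_add_neg]
    _ = A * ((Y + B * C)⁻¹ * Y) := by rw [← mul_sub, ← mul_sub, add_sub_cancel_right]

theorem Matrix.sub_conjTranspose_mul_mul_eq {𝕜 n m : Type*} [RCLike 𝕜] [Fintype n] [Fintype m]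
    [DecidableEq n] {Y T : Matrix n n 𝕜} {C : Matrix m n 𝕜} (hY : Y.IsHermitian)
    (hT : (Y + Cᴴ * C) * T = Y) :
    Y - Tᴴ * (Y + Cᴴ * C) * T = (1 - T)ᴴ * Y * (1 - T) + (C * T)ᴴ * (C * T) := by
  have hTS : Tᴴ * (Y + Cᴴ * C) = Y := by
    simpa [conjTranspose_mul, conjTranspose_add, hY.eq] using congrArg conjTranspose hT
  have e1 : Tᴴ * (Y + Cᴴ * C) * T = Tᴴ * Y := by rw [Matrix.mul_assoc, hT]
  have e2 : Tᴴ * (Y + Cᴴ * C) * T = Y * T := by rw [hTS]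
  calc Y - Tᴴ * (Y + Cᴴ * C) * T
      = Y - Y * T - Tᴴ * Y + Tᴴ * (Y + Cᴴ * C) * T := by rw [← e1, ← e2]; abel
    _ = (1 - T)ᴴ * Y * (1 - T) + (C * T)ᴴ * (C * T) := by
      simp only [conjTranspose_sub, conjTranspose_one, conjTranspose_mul, Matrix.mul_assoc,
        Matrix.add_mul, Matrix.mul_add, Matrix.sub_mul, Matrix.mul_sub, Matrix.one_mul,
        Matrix.mul_one]
      abel

theorem Matrix.PosDef.sub_conjTranspose_mul_mul_of_stein {𝕜 n m : Type*} [RCLike 𝕜] [Fintype n]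
    [Fintype m] [DecidableEq n] {Y A T : Matrix n n 𝕜} {C : Matrix m n 𝕜} (hY : Y.PosDef)
    (hQ : (-(Aᴴ * Y * A - Y - Cᴴ * C)).PosDef) (hT : (Y + Cᴴ * C) * T = Y) :
    (Y - (A * T)ᴴ * Y * (A * T)).PosDef := by
  have hTinj : Function.Injective T.mulVec := by
    refine Function.Injective.of_comp (f := (Y + Cᴴ * C).mulVec) ?_
    simpa only [Function.comp_def, mulVec_mulVec, hT] using mulVec_injective_of_isUnit hY.isUnit
  have hsplit : Y - (A * T)ᴴ * Y * (A * T) =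
      (1 - T)ᴴ * Y * (1 - T) + (C * T)ᴴ * (C * T) + Tᴴ * (-(Aᴴ * Y * A - Y - Cᴴ * C)) * T := by
    rw [← sub_conjTranspose_mul_mul_eq hY.isHermitian hT, conjTranspose_mul]
    noncomm_ring
  rw [hsplit]
  exact PosDef.posSemidef_add ((hY.posSemidef.conjTranspose_mul_mul_same _).add
    (posSemidef_conjTranspose_mul_self _)) (hQ.conjTranspose_mul_mul_same hTinj)

/-- If the Stein inequality `A* Y₀ A - Y₀ - C* C < 0` has a positive definite
solution `Y₀`, then there is an output injection `L` so that `A + L C` has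
spectral radius less than `1`. -/
theorem stein_implies_operator_detectable {n y : Type*} [Fintype n] [Fintype y]
    [DecidableEq n]
    (A : Matrix n n ℂ) (C : Matrix y n ℂ)
    (h : ∃ Y₀ : Matrix n n ℂ, Y₀.PosDef ∧ (-(Aᴴ * Y₀ * A - Y₀ - Cᴴ * C)).PosDef) :
    ∃ L : Matrix n y ℂ, ∀ μ ∈ spectrum ℂ (A + L * C), ‖μ‖ < 1 := by
  obtain ⟨Y₀, hY, hQ⟩ := h
  have hS : IsUnit (Y₀ + Cᴴ * C).det :=
    (hY.add_posSemidef (posSemidef_conjTranspose_mul_self C)).det_pos.ne'.isUnit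
  refine ⟨-(A * (Y₀ + Cᴴ * C)⁻¹ * Cᴴ), fun μ hμ => ?_⟩
  rw [add_neg_mul_inv_mul_mul A Y₀ Cᴴ C hS] at hμ
  exact norm_lt_one_of_mem_spectrum_of_posDef_sub hY
    (hY.sub_conjTranspose_mul_mul_of_stein hQ (mul_nonsing_inv_cancel_left _ Y₀ hS)) hμ
end

section
/- Let A be a commutative integral domain with quotient field K, and let G₂₂ be an n_Y × n_U matrix over K admitting a double coprime factorization: G₂₂ = D⁻¹ N = Ñ D̃⁻¹ with all of D, N, X, Y, D̃, Ñ, X̃, Ỹ matrices over A, det D, det D̃, det X, det X̃ nonzero, and [[D, -N],[-Ỹ, X̃]] [[X, Ñ],[Y, D̃]] = I. Then for any Λ over A, a matrix Q over K satisfies: [[I],[G₂₂]] Q [G₂₂, I] has all entries in A if and only if Q = D̃ Λ D for some matrix Λ over A. -/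
/-!
The Bezout identity of the double coprime factorization gives the inverses of the denominators as
affine expressions in the plant: `D⁻¹ = X - G₂₂ Y` and `D̃⁻¹ = X̃ - Ỹ G₂₂`. Hence
`D̃⁻¹ Q D⁻¹ = X̃ Q X - X̃ (Q G₂₂) Y - Ỹ (G₂₂ Q) X + Ỹ (G₂₂ Q G₂₂) Y` is stable whenever the four
blocks are, and `Λ = D̃⁻¹ Q D⁻¹` is the free parameter. Conversely, for `Q = D̃ Λ D` the four blocks
are `D̃ Λ D`, `D̃ Λ N`, `Ñ Λ D` and `Ñ Λ N`.
-/

open Matrix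

/-- A matrix over the fraction field of `R` is *stable* if all its entries lie in
the image of `R`. -/
def stableMat (R : Type*) [CommRing R] {a b : Type*}
    (M : Matrix a b (FractionRing R)) : Prop :=
  ∀ i j, M i j ∈ Set.range (algebraMap R (FractionRing R))

namespace stableMat

variable {R : Type*} [CommRing R] {a b c : Type*}

theorem mul [Fintype b] {M : Matrix a b (FractionRing R)} {P : Matrix b c (FractionRing R)}
    (hM : stableMat R M) (hP : stableMat R P) : stableMat R (M * P) := fun i j =>
  Subring.sum_mem (algebraMap R (FractionRing R)).range fun k _ =>
    Subring.mul_mem _ (hM i k) (hP k j)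

theorem add {M P : Matrix a b (FractionRing R)} (hM : stableMat R M) (hP : stableMat R P) :
    stableMat R (M + P) := fun i j =>
  Subring.add_mem (algebraMap R (FractionRing R)).range (hM i j) (hP i j)

theorem sub {M P : Matrix a b (FractionRing R)} (hM : stableMat R M) (hP : stableMat R P) :
    stableMat R (M - P) := fun i j =>
  Subring.sub_mem (algebraMap R (FractionRing R)).range (hM i j) (hP i j)

end stableMat

section DoubleCoprime

variable {K : Type*} [CommRing K] {nY nU : Type*} [Fintype nY] [Fintype nU]
  [DecidableEq nY] [DecidableEq nU]
  {G : Matrix nY nU K} {D Xm : Matrix nY nY K} {N Nt : Matrix nY nU K}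
  {Dt Xt : Matrix nU nU K} {Y Yt : Matrix nU nY K}

/-- The first two equations come from the product in the reverse order, which is `1` as well since
the block matrices are square. -/
theorem bezout_blocks
    (hBezout : fromBlocks D (-N) (-Yt) Xt * fromBlocks Xm Nt Y Dt = 1) :
    Xm * D - Nt * Yt = 1 ∧ Dt * Yt = Y * D ∧ Xt * Dt - Yt * Nt = 1 := by
  have hRev := mul_eq_one_comm.mp hBezout
  rw [fromBlocks_multiply, ← fromBlocks_one] at hBezout hRev
  obtain ⟨-, -, -, h₂₂⟩ := fromBlocks_inj.mp hBezout
  obtain ⟨h₁₁, -, h₂₁, -⟩ := fromBlocks_inj.mp hRev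
  refine ⟨?_, ?_, ?_⟩
  · rwa [Matrix.mul_neg, ← sub_eq_add_neg] at h₁₁
  · rw [Matrix.mul_neg, ← sub_eq_add_neg, sub_eq_zero] at h₂₁
    exact h₂₁.symm
  · rwa [Matrix.neg_mul, neg_add_eq_sub] at h₂₂

theorem inv_eq_of_bezout_left (hGDt : G * Dt = Nt)
    (hBezout : fromBlocks D (-N) (-Yt) Xt * fromBlocks Xm Nt Y Dt = 1) :
    D⁻¹ = Xm - G * Y := by
  obtain ⟨h₁₁, h₂₁, -⟩ := bezout_blocks hBezout
  refine inv_eq_left_inv ?_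
  rwa [Matrix.sub_mul, Matrix.mul_assoc, ← h₂₁, ← Matrix.mul_assoc, hGDt]

theorem inv_eq_of_bezout_right (hGDt : G * Dt = Nt)
    (hBezout : fromBlocks D (-N) (-Yt) Xt * fromBlocks Xm Nt Y Dt = 1) :
    Dt⁻¹ = Xt - Yt * G := by
  obtain ⟨-, -, h₂₂⟩ := bezout_blocks hBezout
  refine inv_eq_left_inv ?_
  rwa [Matrix.sub_mul, Matrix.mul_assoc, hGDt]

end DoubleCoprime

section FreeParameter

variable {R : Type*} [CommRing R] {nY nU : Type*} [Fintype nY] [Fintype nU]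
  {G : Matrix nY nU (FractionRing R)} {D Xm : Matrix nY nY (FractionRing R)}
  {N Nt : Matrix nY nU (FractionRing R)} {Dt Xt : Matrix nU nU (FractionRing R)}
  {Y Yt : Matrix nU nY (FractionRing R)} {Q : Matrix nU nY (FractionRing R)}

theorem stableMat_inv_mul_inv [DecidableEq nY] [DecidableEq nU]
    (hX : stableMat R Xm) (hY : stableMat R Y) (hXt : stableMat R Xt) (hYt : stableMat R Yt)
    (hDinv : D⁻¹ = Xm - G * Y) (hDtinv : Dt⁻¹ = Xt - Yt * G)
    (hQG : stableMat R (Q * G)) (hQ : stableMat R Q)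
    (hGQG : stableMat R (G * Q * G)) (hGQ : stableMat R (G * Q)) :
    stableMat R (Dt⁻¹ * Q * D⁻¹) := by
  have hExpand : Dt⁻¹ * Q * D⁻¹ =
      Xt * Q * Xm - Xt * (Q * G) * Y - Yt * (G * Q) * Xm + Yt * (G * Q * G) * Y := by
    rw [hDinv, hDtinv]
    simp only [Matrix.sub_mul, Matrix.mul_sub, Matrix.mul_assoc]
    abel
  rw [hExpand]
  exact ((((hXt.mul hQ).mul hX).sub ((hXt.mul hQG).mul hY)).sub ((hYt.mul hGQ).mul hX)).add
    ((hYt.mul hGQG).mul hY)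

theorem stableMat_blocks_of_eq_mul_mul (hD : stableMat R D) (hN : stableMat R N)
    (hDt : stableMat R Dt) (hNt : stableMat R Nt) (hDG : D * G = N) (hGDt : G * Dt = Nt)
    {Λ : Matrix nU nY (FractionRing R)} (hΛ : stableMat R Λ) :
    stableMat R (Dt * Λ * D * G) ∧ stableMat R (Dt * Λ * D) ∧
      stableMat R (G * (Dt * Λ * D) * G) ∧ stableMat R (G * (Dt * Λ * D)) := by
  have hGQ : G * (Dt * Λ * D) = Nt * Λ * D := by
    rw [← Matrix.mul_assoc, ← Matrix.mul_assoc, hGDt]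
  have hQG : Dt * Λ * D * G = Dt * Λ * N := by rw [Matrix.mul_assoc, hDG]
  have hGQG : G * (Dt * Λ * D) * G = Nt * Λ * N := by rw [hGQ, Matrix.mul_assoc, hDG]
  rw [hQG, hGQG, hGQ]
  exact ⟨(hDt.mul hΛ).mul hN, (hDt.mul hΛ).mul hD, (hNt.mul hΛ).mul hN, (hNt.mul hΛ).mul hD⟩

end FreeParameter

theorem free_param_double_coprime_general {R : Type*} [CommRing R] [IsDomain R]
    {nY nU : Type*} [Fintype nY] [Fintype nU] [DecidableEq nY] [DecidableEq nU]
    (G₂₂ : Matrix nY nU (FractionRing R))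
    (D Xm : Matrix nY nY (FractionRing R))
    (N Nt : Matrix nY nU (FractionRing R))
    (Dt Xt : Matrix nU nU (FractionRing R))
    (Y Yt : Matrix nU nY (FractionRing R))
    (hD : stableMat R D) (hN : stableMat R N) (hX : stableMat R Xm)
    (hY : stableMat R Y) (hDt : stableMat R Dt) (hNt : stableMat R Nt)
    (hXt : stableMat R Xt) (hYt : stableMat R Yt)
    (hdD : D.det ≠ 0) (hdDt : Dt.det ≠ 0)
    (hfac1 : G₂₂ = D⁻¹ * N) (hfac2 : G₂₂ = Nt * Dt⁻¹)
    (hBezout : Matrix.fromBlocks D (-N) (-Yt) Xt *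
        Matrix.fromBlocks Xm Nt Y Dt = 1) :
    ∀ Q : Matrix nU nY (FractionRing R),
      (stableMat R (Q * G₂₂) ∧ stableMat R Q ∧
        stableMat R (G₂₂ * Q * G₂₂) ∧ stableMat R (G₂₂ * Q)) ↔
      ∃ Λ : Matrix nU nY (FractionRing R), stableMat R Λ ∧ Q = Dt * Λ * D := by
  have huD : IsUnit D.det := hdD.isUnit
  have huDt : IsUnit Dt.det := hdDt.isUnit
  have hDG : D * G₂₂ = N := hfac1 ▸ mul_nonsing_inv_cancel_left D N huD
  have hGDt : G₂₂ * Dt = Nt := hfac2 ▸ nonsing_inv_mul_cancel_right Dt Nt huDt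
  intro Q
  constructor
  · rintro ⟨hQG, hQ, hGQG, hGQ⟩
    refine ⟨Dt⁻¹ * Q * D⁻¹, stableMat_inv_mul_inv hX hY hXt hYt
      (inv_eq_of_bezout_left hGDt hBezout) (inv_eq_of_bezout_right hGDt hBezout)
      hQG hQ hGQG hGQ, ?_⟩
    rw [Matrix.mul_assoc Dt, nonsing_inv_mul_cancel_right D _ huD,
      mul_nonsing_inv_cancel_left Dt _ huDt]
  · rintro ⟨Λ, hΛ, rfl⟩
    exact stableMat_blocks_of_eq_mul_mul hD hN hDt hNt hDG hGDt hΛ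

/-- Free-parameter characterization (Quadrat): given a double coprime
factorization `G₂₂ = D⁻¹ N = Ñ D̃⁻¹`, a matrix `Q` over the quotient field
satisfies that all entries of `[[I],[G₂₂]] Q [G₂₂, I]` are stable iff
`Q = D̃ Λ D` for some stable `Λ`. -/
theorem free_param_double_coprime {R : Type*} [CommRing R] [IsDomain R]
    {nY nU : Type*} [Fintype nY] [Fintype nU] [DecidableEq nY] [DecidableEq nU]
    (G₂₂ : Matrix nY nU (FractionRing R))
    (D Xm : Matrix nY nY (FractionRing R))
    (N Nt : Matrix nY nU (FractionRing R))
    (Dt Xt : Matrix nU nU (FractionRing R))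
    (Y Yt : Matrix nU nY (FractionRing R))
    (hD : stableMat R D) (hN : stableMat R N) (hX : stableMat R Xm)
    (hY : stableMat R Y) (hDt : stableMat R Dt) (hNt : stableMat R Nt)
    (hXt : stableMat R Xt) (hYt : stableMat R Yt)
    (hdD : D.det ≠ 0) (hdDt : Dt.det ≠ 0) (hdX : Xm.det ≠ 0) (hdXt : Xt.det ≠ 0)
    (hfac1 : G₂₂ = D⁻¹ * N) (hfac2 : G₂₂ = Nt * Dt⁻¹)
    (hBezout : Matrix.fromBlocks D (-N) (-Yt) Xt *
        Matrix.fromBlocks Xm Nt Y Dt = 1) :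
    ∀ Q : Matrix nU nY (FractionRing R),
      (stableMat R (Q * G₂₂) ∧ stableMat R Q ∧
        stableMat R (G₂₂ * Q * G₂₂) ∧ stableMat R (G₂₂ * Q)) ↔
      ∃ Λ : Matrix nU nY (FractionRing R), stableMat R Λ ∧ Q = Dt * Λ * D :=
  free_param_double_coprime_general G₂₂ D Xm N Nt Dt Xt Y Yt hD hN hX hY hDt hNt hXt hYt hdD hdDt
    hfac1 hfac2 hBezout
end

section
/- Let A be a commutative integral domain with quotient field K. Suppose K* stabilizes the plant G = [[G₁₁, G₁₂],[G₂₁, G₂₂]] (i.e., the nine closed-loop transfer matrices Θ(G,K*) all have entries in A). Set U* = (I - G₂₂K*)⁻¹, V* = K*U*. If Q is any matrix over K such that the 3×3 block matrix [G₁₂; I; G₂₂] Q [G₂₁, G₂₂, I] has all entries in A and det(U* + G₂₂Q) ≠ 0, then K := (V* + Q)(U* + G₂₂Q)⁻¹ also stabilizes G, i.e., Θ(G,K) has all entries in A. -/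
open Matrix

/-- All nine block entries of the closed-loop transfer matrix `Θ(G,K)` are
stable, where `U = (I - G₂₂ K)⁻¹` and `V = K U`. -/
def ThetaStable (R : Type*) [CommRing R] [IsDomain R]
    {nW nZ nY nU : Type*} [Fintype nY] [Fintype nU] [DecidableEq nY] [DecidableEq nU]
    (G₁₁ : Matrix nZ nW (FractionRing R)) (G₁₂ : Matrix nZ nU (FractionRing R))
    (G₂₁ : Matrix nY nW (FractionRing R)) (G₂₂ : Matrix nY nU (FractionRing R))
    (K : Matrix nU nY (FractionRing R)) : Prop :=
  stableMat R (G₁₁ + G₁₂ * (K * (1 - G₂₂ * K)⁻¹) * G₂₁) ∧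
  stableMat R (G₁₂ + G₁₂ * (K * (1 - G₂₂ * K)⁻¹) * G₂₂) ∧
  stableMat R (G₁₂ * (K * (1 - G₂₂ * K)⁻¹)) ∧
  stableMat R ((K * (1 - G₂₂ * K)⁻¹) * G₂₁) ∧
  stableMat R (1 + (K * (1 - G₂₂ * K)⁻¹) * G₂₂) ∧
  stableMat R (K * (1 - G₂₂ * K)⁻¹) ∧
  stableMat R ((1 - G₂₂ * K)⁻¹ * G₂₁) ∧
  stableMat R ((1 - G₂₂ * K)⁻¹ * G₂₂) ∧
  stableMat R ((1 - G₂₂ * K)⁻¹)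

/-!
With `U = (I - G₂₂K)⁻¹` and `V = KU` one has `U - G₂₂V = I`, and conversely any pair `(U, V)`
with `U - G₂₂V = I` and `U` invertible comes from the controller `K = VU⁻¹`. The new pair
`(U* + G₂₂Q, V* + Q)` again satisfies `U - G₂₂V = I`, and every entry of `Θ` is affine in
`(U, V)`, so `Θ(G; U* + G₂₂Q, V* + Q) = Θ(G; U*, V*) + [G₁₂; I; G₂₂] Q [G₂₁, G₂₂, I]`
is a sum of two stable matrices.
-/

namespace Matrix

variable {α : Type*} [CommRing α] {m n : Type*} [Fintype m] [Fintype n] [DecidableEq n]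

theorem inv_one_sub_mul_sub_mul_mul_inv {G : Matrix n m α} {K : Matrix m n α}
    (hK : IsUnit (1 - G * K).det) : (1 - G * K)⁻¹ - G * (K * (1 - G * K)⁻¹) = 1 := by
  rw [← Matrix.mul_assoc]
  nth_rw 1 [← Matrix.one_mul (1 - G * K)⁻¹]
  rw [← Matrix.sub_mul, Matrix.mul_nonsing_inv _ hK]

theorem one_sub_mul_mul_inv_of_sub_mul_eq_one {G : Matrix n m α} {U : Matrix n n α}
    {V : Matrix m n α} (h : U - G * V = 1) (hU : IsUnit U.det) :
    1 - G * (V * U⁻¹) = U⁻¹ :=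
  calc 1 - G * (V * U⁻¹) = U * U⁻¹ - G * V * U⁻¹ := by
        rw [Matrix.mul_nonsing_inv _ hU, Matrix.mul_assoc]
    _ = U⁻¹ := by rw [← Matrix.sub_mul, h, Matrix.one_mul]

end Matrix

section Stability

theorem stableMat_add {R : Type*} [CommRing R] {a b : Type*}
    {M N : Matrix a b (FractionRing R)} (hM : stableMat R M) (hN : stableMat R N) :
    stableMat R (M + N) :=
  fun i j => (algebraMap R (FractionRing R)).range.add_mem (hM i j) (hN i j)

variable {R : Type*} [CommRing R]
  {nW nZ nY nU : Type*} [Fintype nY] [Fintype nU] [DecidableEq nU]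
  (G₁₁ : Matrix nZ nW (FractionRing R)) (G₁₂ : Matrix nZ nU (FractionRing R))
  (G₂₁ : Matrix nY nW (FractionRing R)) (G₂₂ : Matrix nY nU (FractionRing R))

/-- Stability of `Θ(G; U, V)`, the closed-loop matrix written in terms of `U` and `V`. -/
def ClosedLoopStable (U : Matrix nY nY (FractionRing R)) (V : Matrix nU nY (FractionRing R)) :
    Prop :=
  stableMat R (G₁₁ + G₁₂ * V * G₂₁) ∧ stableMat R (G₁₂ + G₁₂ * V * G₂₂) ∧
  stableMat R (G₁₂ * V) ∧ stableMat R (V * G₂₁) ∧ stableMat R (1 + V * G₂₂) ∧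
  stableMat R V ∧ stableMat R (U * G₂₁) ∧ stableMat R (U * G₂₂) ∧ stableMat R U

variable {G₁₁ G₁₂ G₂₁ G₂₂}

/-- `Θ(G; U + G₂₂Q, V + Q) = Θ(G; U, V) + [G₁₂; I; G₂₂] Q [G₂₁, G₂₂, I]`. -/
theorem ClosedLoopStable.add {U : Matrix nY nY (FractionRing R)}
    {V Q : Matrix nU nY (FractionRing R)} (hUV : ClosedLoopStable G₁₁ G₁₂ G₂₁ G₂₂ U V)
    (hQ : stableMat R (G₁₂ * Q * G₂₁) ∧ stableMat R (G₁₂ * Q * G₂₂) ∧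
      stableMat R (G₁₂ * Q) ∧ stableMat R (Q * G₂₁) ∧ stableMat R (Q * G₂₂) ∧
      stableMat R Q ∧ stableMat R (G₂₂ * Q * G₂₁) ∧
      stableMat R (G₂₂ * Q * G₂₂) ∧ stableMat R (G₂₂ * Q)) :
    ClosedLoopStable G₁₁ G₁₂ G₂₁ G₂₂ (U + G₂₂ * Q) (V + Q) := by
  obtain ⟨h₁, h₂, h₃, h₄, h₅, h₆, h₇, h₈, h₉⟩ := hUV
  obtain ⟨q₁, q₂, q₃, q₄, q₅, q₆, q₇, q₈, q₉⟩ := hQ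
  simp only [ClosedLoopStable, Matrix.mul_add, Matrix.add_mul, ← add_assoc]
  exact ⟨stableMat_add h₁ q₁, stableMat_add h₂ q₂, stableMat_add h₃ q₃, stableMat_add h₄ q₄,
    stableMat_add h₅ q₅, stableMat_add h₆ q₆, stableMat_add h₇ q₇, stableMat_add h₈ q₈,
    stableMat_add h₉ q₉⟩

variable [IsDomain R] [DecidableEq nY]

theorem thetaStable_iff_closedLoopStable (K : Matrix nU nY (FractionRing R)) :
    ThetaStable R G₁₁ G₁₂ G₂₁ G₂₂ K ↔
      ClosedLoopStable G₁₁ G₁₂ G₂₁ G₂₂ (1 - G₂₂ * K)⁻¹ (K * (1 - G₂₂ * K)⁻¹) :=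
  Iff.rfl

theorem thetaStable_mul_inv_iff {U : Matrix nY nY (FractionRing R)}
    {V : Matrix nU nY (FractionRing R)} (h : U - G₂₂ * V = 1) (hU : IsUnit U.det) :
    ThetaStable R G₁₁ G₁₂ G₂₁ G₂₂ (V * U⁻¹) ↔ ClosedLoopStable G₁₁ G₁₂ G₂₁ G₂₂ U V := by
  rw [thetaStable_iff_closedLoopStable, Matrix.one_sub_mul_mul_inv_of_sub_mul_eq_one h hU,
    Matrix.nonsing_inv_nonsing_inv _ hU, Matrix.mul_assoc, Matrix.nonsing_inv_mul _ hU,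
    Matrix.mul_one]

end Stability

/-- Parametrization of stabilizing controllers in terms of one stabilizing
controller `K*`: if `Q` makes all nine entries of `[G₁₂; I; G₂₂] Q [G₂₁, G₂₂, I]`
stable and `det (U* + G₂₂ Q) ≠ 0`, then `K = (V* + Q)(U* + G₂₂ Q)⁻¹` also
stabilizes `G`. -/
theorem parametrization_stabilizing_controllers {R : Type*} [CommRing R] [IsDomain R]
    {nW nZ nY nU : Type*} [Fintype nY] [Fintype nU] [DecidableEq nY] [DecidableEq nU]
    (G₁₁ : Matrix nZ nW (FractionRing R)) (G₁₂ : Matrix nZ nU (FractionRing R))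
    (G₂₁ : Matrix nY nW (FractionRing R)) (G₂₂ : Matrix nY nU (FractionRing R))
    (Ks : Matrix nU nY (FractionRing R))
    (hdets : (1 - G₂₂ * Ks).det ≠ 0)
    (hstab : ThetaStable R G₁₁ G₁₂ G₂₁ G₂₂ Ks)
    (Q : Matrix nU nY (FractionRing R))
    (hQ : stableMat R (G₁₂ * Q * G₂₁) ∧ stableMat R (G₁₂ * Q * G₂₂) ∧
      stableMat R (G₁₂ * Q) ∧ stableMat R (Q * G₂₁) ∧ stableMat R (Q * G₂₂) ∧
      stableMat R Q ∧ stableMat R (G₂₂ * Q * G₂₁) ∧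
      stableMat R (G₂₂ * Q * G₂₂) ∧ stableMat R (G₂₂ * Q))
    (hdetQ : ((1 - G₂₂ * Ks)⁻¹ + G₂₂ * Q).det ≠ 0) :
    (1 - G₂₂ * ((Ks * (1 - G₂₂ * Ks)⁻¹ + Q) *
        ((1 - G₂₂ * Ks)⁻¹ + G₂₂ * Q)⁻¹)).det ≠ 0 ∧
    ThetaStable R G₁₁ G₁₂ G₂₁ G₂₂
      ((Ks * (1 - G₂₂ * Ks)⁻¹ + Q) * ((1 - G₂₂ * Ks)⁻¹ + G₂₂ * Q)⁻¹) := by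
  have hW : IsUnit ((1 - G₂₂ * Ks)⁻¹ + G₂₂ * Q).det := isUnit_iff_ne_zero.mpr hdetQ
  have hfactor : (1 - G₂₂ * Ks)⁻¹ + G₂₂ * Q - G₂₂ * (Ks * (1 - G₂₂ * Ks)⁻¹ + Q) = 1 := by
    convert Matrix.inv_one_sub_mul_sub_mul_mul_inv (isUnit_iff_ne_zero.mpr hdets) using 1
    rw [Matrix.mul_add]
    abel
  refine ⟨?_, (thetaStable_mul_inv_iff hfactor hW).mpr
    (((thetaStable_iff_closedLoopStable Ks).mp hstab).add hQ)⟩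
  rw [Matrix.one_sub_mul_mul_inv_of_sub_mul_eq_one hfactor hW]
  exact (Matrix.isUnit_nonsing_inv_det _ hW).ne_zero
end

section
/- Let G₂₂ = D⁻¹N = ÑD̃⁻¹ with a double coprime factorization over a commutative integral domain A (so [[D,-N],[-Ỹ,X̃]][[X,Ñ],[Y,D̃]] = I with all blocks over A and det D, det D̃, det X, det X̃ ≠ 0). Then for any Λ over A with det(X + ÑΛ) ≠ 0 and det(X̃ + ΛN) ≠ 0, one has the equality of controllers (Y + D̃Λ)(X + ÑΛ)⁻¹ = (X̃ + ΛN)⁻¹(Ỹ + ΛD). -/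
/-! The Bezout identity `[[D, -N], [-Ỹ, X̃]] [[X, Ñ], [Y, D̃]] = 1` yields `X̃Y = ỸX`,
`DÑ = ND̃`, `DX - NY = 1` and `X̃D̃ - ỸÑ = 1`. Expanding both sides of
`(X̃ + ΛN)(Y + D̃Λ) = (Ỹ + ΛD)(X + ÑΛ)` and substituting these, the terms in `Λ` and `ΛΛ`
cancel. Multiplying this cross identity by `(X̃ + ΛN)⁻¹` on the left and by `(X + ÑΛ)⁻¹`
on the right gives the equality of the two controllers. -/

open Matrix

namespace Matrix

variable {m n α : Type*} [Fintype m] [Fintype n] [DecidableEq m] [DecidableEq n]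

section Ring

variable [Ring α] {D Xm : Matrix m m α} {N Nt : Matrix m n α} {Dt Xt : Matrix n n α}
  {Y Yt : Matrix n m α}

theorem bezout_relations_of_fromBlocks_mul_eq_one
    (h : fromBlocks D (-N) (-Yt) Xt * fromBlocks Xm Nt Y Dt = 1) :
    D * Xm - N * Y = 1 ∧ D * Nt = N * Dt ∧ Xt * Y = Yt * Xm ∧ Xt * Dt - Yt * Nt = 1 := by
  rw [fromBlocks_multiply, ← fromBlocks_one, fromBlocks_inj] at h
  obtain ⟨h₁₁, h₁₂, h₂₁, h₂₂⟩ := h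
  simp only [Matrix.neg_mul, ← sub_eq_add_neg, neg_add_eq_sub, sub_eq_zero] at h₁₁ h₁₂ h₂₁ h₂₂
  exact ⟨h₁₁, h₁₂, h₂₁, h₂₂⟩

theorem youla_kucera_cross_mul_eq
    (h : fromBlocks D (-N) (-Yt) Xt * fromBlocks Xm Nt Y Dt = 1) (Λ : Matrix n m α) :
    (Xt + Λ * N) * (Y + Dt * Λ) = (Yt + Λ * D) * (Xm + Nt * Λ) := by
  obtain ⟨hDX, hDN, hXY, hXD⟩ := bezout_relations_of_fromBlocks_mul_eq_one h
  calc (Xt + Λ * N) * (Y + Dt * Λ)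
      = Xt * Y + Λ * (N * Y) + (Xt * Dt) * Λ + Λ * (N * Dt) * Λ := by
        simp only [Matrix.add_mul, Matrix.mul_add, Matrix.mul_assoc]
        abel
    _ = Yt * Xm + Λ * (D * Xm - 1) + (1 + Yt * Nt) * Λ + Λ * (D * Nt) * Λ := by
        rw [hXY, hDN, ← hDX, ← hXD, sub_sub_cancel, sub_add_cancel]
    _ = (Yt + Λ * D) * (Xm + Nt * Λ) := by
        simp only [Matrix.add_mul, Matrix.mul_add, Matrix.mul_sub, Matrix.mul_assoc,
          Matrix.mul_one, Matrix.one_mul]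
        abel

end Ring

theorem mul_nonsing_inv_eq_nonsing_inv_mul_of_mul_eq [CommRing α] {A : Matrix n n α}
    {E : Matrix m m α} {B C : Matrix n m α} (hA : IsUnit A.det) (hE : IsUnit E.det)
    (h : A * B = C * E) : B * E⁻¹ = A⁻¹ * C := by
  rw [← nonsing_inv_mul_cancel_left A B hA, h, Matrix.mul_assoc, Matrix.mul_assoc,
    mul_nonsing_inv E hE, Matrix.mul_one]

end Matrix

theorem youla_kucera_consistency_general {R : Type*} [CommRing R] [IsDomain R]
    {nY nU : Type*} [Fintype nY] [Fintype nU] [DecidableEq nY] [DecidableEq nU]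
    (D Xm : Matrix nY nY (FractionRing R))
    (N Nt : Matrix nY nU (FractionRing R))
    (Dt Xt : Matrix nU nU (FractionRing R))
    (Y Yt : Matrix nU nY (FractionRing R))
    (hBezout : Matrix.fromBlocks D (-N) (-Yt) Xt *
        Matrix.fromBlocks Xm Nt Y Dt = 1)
    (Λ : Matrix nU nY (FractionRing R))
    (hd1 : (Xm + Nt * Λ).det ≠ 0) (hd2 : (Xt + Λ * N).det ≠ 0) :
    (Y + Dt * Λ) * (Xm + Nt * Λ)⁻¹ = (Xt + Λ * N)⁻¹ * (Yt + Λ * D) :=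
  mul_nonsing_inv_eq_nonsing_inv_mul_of_mul_eq (isUnit_iff_ne_zero.mpr hd2)
    (isUnit_iff_ne_zero.mpr hd1) (youla_kucera_cross_mul_eq hBezout Λ)

/-- Consistency of the two Youla–Kučera parametrization formulas:
`(Y + D̃Λ)(X + ÑΛ)⁻¹ = (X̃ + ΛN)⁻¹(Ỹ + ΛD)`. -/
theorem youla_kucera_consistency {R : Type*} [CommRing R] [IsDomain R]
    {nY nU : Type*} [Fintype nY] [Fintype nU] [DecidableEq nY] [DecidableEq nU]
    (G₂₂ : Matrix nY nU (FractionRing R))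
    (D Xm : Matrix nY nY (FractionRing R))
    (N Nt : Matrix nY nU (FractionRing R))
    (Dt Xt : Matrix nU nU (FractionRing R))
    (Y Yt : Matrix nU nY (FractionRing R))
    (hD : stableMat R D) (hN : stableMat R N) (hX : stableMat R Xm)
    (hY : stableMat R Y) (hDt : stableMat R Dt) (hNt : stableMat R Nt)
    (hXt : stableMat R Xt) (hYt : stableMat R Yt)
    (hdD : D.det ≠ 0) (hdDt : Dt.det ≠ 0) (hdX : Xm.det ≠ 0) (hdXt : Xt.det ≠ 0)
    (hfac1 : G₂₂ = D⁻¹ * N) (hfac2 : G₂₂ = Nt * Dt⁻¹)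
    (hBezout : Matrix.fromBlocks D (-N) (-Yt) Xt *
        Matrix.fromBlocks Xm Nt Y Dt = 1)
    (Λ : Matrix nU nY (FractionRing R)) (hΛ : stableMat R Λ)
    (hd1 : (Xm + Nt * Λ).det ≠ 0) (hd2 : (Xt + Λ * N).det ≠ 0) :
    (Y + Dt * Λ) * (Xm + Nt * Λ)⁻¹ = (Xt + Λ * N)⁻¹ * (Yt + Λ * D) :=
  youla_kucera_consistency_general D Xm N Nt Dt Xt Y Yt hBezout Λ hd1 hd2
end

section
/- Let A ∈ L(X), Δ ⊆ L(X) a unital C*-subalgebra with commutant D_Δ, and define μ̂_Δ(A) = inf{γ > 0 : ‖Q⁻¹AQ‖ < γ for some invertible Q ∈ D_Δ}. Then μ_Δ(A) ≤ μ̂_Δ(A). -/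
open Matrix
open scoped Classical

/-!
If `Q` is invertible and commutes with `δ`, then `Q⁻¹ (1 - δ A) Q = 1 - δ (Q⁻¹ A Q)`, so
`1 - δ A` is invertible as soon as `‖δ‖ ‖Q⁻¹ A Q‖ < 1` (Neumann series). Hence every `δ ∈ Δ`
making `1 - δ A` singular has `‖δ‖ ≥ 1 / γ` whenever `‖Q⁻¹ A Q‖ < γ`, i.e. `μ_Δ(A) ≤ γ`.
-/

section Ring

variable {R : Type*} [Ring R]

theorem one_sub_mul_units_conj {u : Rˣ} {δ : R} (h : Commute δ u) (a : R) :
    1 - δ * (↑u⁻¹ * a * u) = ↑u⁻¹ * (1 - δ * a) * u := by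
  rw [mul_sub, sub_mul, mul_one, Units.inv_mul, ← mul_assoc δ, ← mul_assoc δ,
    (h.units_inv_right).eq, mul_assoc _ δ a]

theorem isUnit_one_sub_mul_units_conj_iff {u : Rˣ} {δ : R} (h : Commute δ u) (a : R) :
    IsUnit (1 - δ * (↑u⁻¹ * a * u)) ↔ IsUnit (1 - δ * a) := by
  rw [one_sub_mul_units_conj h, Units.isUnit_mul_units, Units.isUnit_units_mul]

end Ring

section NormedRing

variable {R : Type*} [NormedRing R] [HasSummableGeomSeries R]

theorem isUnit_one_sub_mul_of_norm_mul_norm_lt_one {a b : R} (h : ‖a‖ * ‖b‖ < 1) :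
    IsUnit (1 - a * b) :=
  (Units.oneSub (a * b) ((norm_mul_le a b).trans_lt h)).isUnit

theorem one_le_norm_mul_norm_units_conj_of_not_isUnit {u : Rˣ} {δ a : R} (h : Commute δ u)
    (hδa : ¬ IsUnit (1 - δ * a)) : 1 ≤ ‖δ‖ * ‖↑u⁻¹ * a * u‖ := by
  by_contra! hlt
  exact hδa ((isUnit_one_sub_mul_units_conj_iff h a).1
    (isUnit_one_sub_mul_of_norm_mul_norm_lt_one hlt))

end NormedRing

theorem Matrix.one_le_norm_toEuclideanCLM_mul_conj {𝕜 n : Type*} [RCLike 𝕜] [Fintype n]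
    [DecidableEq n] {A δ Q : Matrix n n 𝕜} (hQ : IsUnit Q) (hδQ : δ * Q = Q * δ)
    (hδA : ¬ IsUnit (1 - δ * A)) :
    1 ≤ ‖toEuclideanCLM (𝕜 := 𝕜) δ‖ * ‖toEuclideanCLM (𝕜 := 𝕜) (Q⁻¹ * A * Q)‖ := by
  set f := toEuclideanCLM (𝕜 := 𝕜) (n := n)
  set u := Units.map f.toRingEquiv.toMonoidHom hQ.unit
  have hu_inv : ↑u⁻¹ = f Q⁻¹ := by
    rw [Units.coe_map_inv, Matrix.coe_units_inv, hQ.unit_spec]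
    rfl
  have hu : ↑u = f Q := by
    rw [Units.coe_map, hQ.unit_spec]
    rfl
  have hcomm : Commute (f δ) u := by
    rw [Commute, SemiconjBy, hu, ← map_mul, ← map_mul, hδQ]
  have hfδA : ¬ IsUnit (1 - f δ * f A) := by
    rwa [← map_mul, ← map_one f, ← map_sub, MulEquiv.isUnit_map]
  simpa only [map_mul, hu_inv, hu] using one_le_norm_mul_norm_units_conj_of_not_isUnit hcomm hfδA

theorem Real.one_div_sInf_le {s : Set ℝ} (hs : s.Nonempty) {γ : ℝ} (hγ : 0 < γ)
    (h : ∀ r ∈ s, 1 ≤ r * γ) : 1 / sInf s ≤ γ := by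
  have hle : γ⁻¹ ≤ sInf s := le_csInf hs fun r hr => (inv_le_iff_one_le_mul₀ hγ).2 (h r hr)
  simpa using one_div_le_one_div_of_le (inv_pos.2 hγ) hle

/-- The structured singular value is bounded above by its scaled-norm upper
bound: `μ_Δ(A) ≤ μ̂_Δ(A)`, where
`μ̂_Δ(A) = inf { γ > 0 : ‖Q⁻¹ A Q‖ < γ for some invertible Q in the commutant of Δ }`. -/
theorem mu_le_muhat {n : Type*} [Fintype n] [DecidableEq n]
    (A : Matrix n n ℂ) (Δ : StarSubalgebra ℂ (Matrix n n ℂ))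
    (s : Set ℝ)
    (hs : s = {r : ℝ | ∃ δ ∈ Δ, ‖Matrix.toEuclideanCLM (𝕜 := ℂ) δ‖ = r ∧
      ¬ IsUnit (1 - δ * A)})
    (μ : ℝ) (hμ : μ = if s.Nonempty then 1 / sInf s else 0)
    (μhat : ℝ)
    (hμhat : μhat = sInf {γ : ℝ | 0 < γ ∧ ∃ Q : Matrix n n ℂ,
      (∀ δ ∈ Δ, δ * Q = Q * δ) ∧ IsUnit Q ∧
        ‖Matrix.toEuclideanCLM (𝕜 := ℂ) (Q⁻¹ * A * Q)‖ < γ}) :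
    μ ≤ μhat := by
  subst hμ hμhat
  -- `Q = 1` makes the set defining `μhat` nonempty; otherwise its `sInf` would be the junk `0`.
  have hA : ‖toEuclideanCLM (𝕜 := ℂ) (n := n) (1⁻¹ * A * 1)‖ <
      ‖toEuclideanCLM (𝕜 := ℂ) (n := n) A‖ + 1 := by
    simp
  refine le_csInf ⟨_, by positivity, 1, fun δ _ => by simp, isUnit_one, hA⟩ ?_
  rintro γ ⟨hγ, Q, hQΔ, hQ, hQA⟩
  split_ifs with hs_ne
  · refine Real.one_div_sInf_le hs_ne hγ ?_
    rw [hs]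
    rintro _ ⟨δ, hδ, rfl, hδA⟩
    calc 1 ≤ ‖toEuclideanCLM (𝕜 := ℂ) δ‖ * ‖toEuclideanCLM (𝕜 := ℂ) (Q⁻¹ * A * Q)‖ :=
          one_le_norm_toEuclideanCLM_mul_conj hQ (hQΔ δ hδ) hδA
      _ ≤ ‖toEuclideanCLM (𝕜 := ℂ) δ‖ * γ := by gcongr
  · exact hγ.le
end

section
/- Let X = X₁ ⊕ ⋯ ⊕ X_d be finite-dimensional, A : X → X, B₂ : U → X. Then there exists a positive-definite block-diagonal P ∈ D with B_{2,⊥}(APA* - P)B_{2,⊥}* < 0, where B_{2,⊥} is a maximal-rank matrix with B_{2,⊥}B₂ = 0, if and only if there exist μ > 0 and a positive-definite block-diagonal P' with A P' A* - P' - μ B₂B₂* < 0. -/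
open Matrix
open scoped ComplexOrder

section Aux

variable {n m k : Type*} [Fintype n] [Fintype m] [Fintype k]

lemma aux_quad_congr (M : Matrix n n ℂ) (N : Matrix k n ℂ) (y : k → ℂ) :
    star (Nᴴ *ᵥ y) ⬝ᵥ M *ᵥ (Nᴴ *ᵥ y) = star y ⬝ᵥ (N * M * Nᴴ) *ᵥ y := by
  simp [star_mulVec, ← dotProduct_mulVec, mulVec_mulVec, Matrix.mul_assoc]

lemma aux_quad_im_zero {M : Matrix n n ℂ} (hM : M.IsHermitian) (x : n → ℂ) :
    (star x ⬝ᵥ M *ᵥ x).im = 0 := by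
  have h : star (star x ⬝ᵥ M *ᵥ x) = star x ⬝ᵥ M *ᵥ x := by
    conv_lhs => rw [star_dotProduct, star_star, star_mulVec, ← dotProduct_mulVec, hM.eq]
  exact Complex.conj_eq_iff_im.mp h

lemma aux_quad_BBt (B : Matrix n m ℂ) (x : n → ℂ) :
    star x ⬝ᵥ (B * Bᴴ) *ᵥ x = star (Bᴴ *ᵥ x) ⬝ᵥ (Bᴴ *ᵥ x) := by
  simp [star_mulVec, ← dotProduct_mulVec, mulVec_mulVec]

lemma aux_quad_continuous (M : Matrix n n ℂ) :
    Continuous fun x : n → ℂ => (star x ⬝ᵥ M *ᵥ x).re := by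
  apply Complex.continuous_re.comp
  simp only [dotProduct, mulVec, Pi.star_apply]
  fun_prop

lemma aux_quad_smul (M : Matrix n n ℂ) (c : ℝ) (x : n → ℂ) :
    (star ((c : ℂ) • x) ⬝ᵥ M *ᵥ ((c : ℂ) • x)).re = (c * c) * (star x ⬝ᵥ M *ᵥ x).re := by
  simp only [star_smul, mulVec_smul, smul_dotProduct, dotProduct_smul, smul_eq_mul,
    Complex.star_def, Complex.conj_ofReal, ← mul_assoc, ← Complex.ofReal_mul,
    Complex.re_ofReal_mul]

lemma aux_quad_sub_smul (H BB : Matrix n n ℂ) (μ : ℝ) (x : n → ℂ) :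
    (star x ⬝ᵥ (-(H - (μ : ℂ) • BB)) *ᵥ x).re
      = -((star x ⬝ᵥ H *ᵥ x).re - μ * (star x ⬝ᵥ BB *ᵥ x).re) := by
  simp [neg_mulVec, sub_mulVec, smul_mulVec, dotProduct_smul, Complex.re_ofReal_mul,
    smul_eq_mul, ← Complex.ofReal_mul]

/-- Finsler's lemma: if the Hermitian quadratic form of `H` is negative on
`ker Bᴴ \ {0}`, then `H - μ B Bᴴ` has negative quadratic form for some `μ > 0`. -/
lemma aux_finsler (H : Matrix n n ℂ) (B : Matrix n m ℂ)
    (hneg : ∀ x : n → ℂ, Bᴴ *ᵥ x = 0 → x ≠ 0 → (star x ⬝ᵥ H *ᵥ x).re < 0) :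
    ∃ μ : ℝ, 0 < μ ∧ ∀ x : n → ℂ, x ≠ 0 →
      (star x ⬝ᵥ H *ᵥ x).re - μ * (star x ⬝ᵥ (B * Bᴴ) *ᵥ x).re < 0 := by
  set f : (n → ℂ) → ℝ := fun x => (star x ⬝ᵥ H *ᵥ x).re with hf_def
  set g : (n → ℂ) → ℝ := fun x => (star x ⬝ᵥ (B * Bᴴ) *ᵥ x).re with hg_def
  have hf : Continuous f := aux_quad_continuous H
  have hg : Continuous g := aux_quad_continuous (B * Bᴴ)
  have hg0 : ∀ x, 0 ≤ g x := by
    intro x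
    have h := dotProduct_star_self_nonneg (Bᴴ *ᵥ x)
    rw [hg_def]
    simp only [aux_quad_BBt]
    exact (Complex.le_def.mp h).1
  have hgz : ∀ x, g x = 0 → Bᴴ *ᵥ x = 0 := by
    intro x hx
    have h := dotProduct_star_self_nonneg (Bᴴ *ᵥ x)
    have him : (star (Bᴴ *ᵥ x) ⬝ᵥ (Bᴴ *ᵥ x)).im = 0 := (Complex.le_def.mp h).2.symm
    have hre : (star (Bᴴ *ᵥ x) ⬝ᵥ (Bᴴ *ᵥ x)).re = 0 := by
      rw [hg_def] at hx; simpa [aux_quad_BBt] using hx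
    have : star (Bᴴ *ᵥ x) ⬝ᵥ (Bᴴ *ᵥ x) = 0 := Complex.ext hre him
    exact dotProduct_star_self_eq_zero.mp this
  -- reduce to the sphere
  have key : ∃ μ : ℝ, 0 < μ ∧ ∀ x ∈ Metric.sphere (0 : n → ℂ) 1, f x - μ * g x < 0 := by
    have hS : IsCompact (Metric.sphere (0 : n → ℂ) 1) := isCompact_sphere 0 1
    set K := Metric.sphere (0 : n → ℂ) 1 ∩ f ⁻¹' Set.Ici 0 with hK_def
    have hK : IsCompact K := hS.inter_right (isClosed_Ici.preimage hf)
    have hSne : ∀ x ∈ Metric.sphere (0 : n → ℂ) 1, x ≠ 0 := by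
      intro x hx
      rw [mem_sphere_zero_iff_norm] at hx
      intro h0; rw [h0, norm_zero] at hx; norm_num at hx
    rcases K.eq_empty_or_nonempty with hKe | hKne
    · refine ⟨1, one_pos, fun x hx => ?_⟩
      have hxK : x ∉ K := by rw [hKe]; exact Set.notMem_empty x
      have : ¬ (0 ≤ f x) := fun h => hxK ⟨hx, h⟩
      have hfx : f x < 0 := lt_of_not_ge this
      nlinarith [hg0 x]
    · obtain ⟨x₀, hx₀K, hx₀min⟩ := hK.exists_isMinOn hKne (hg.continuousOn)
      set ε := g x₀ with hε_def
      have hε : 0 < ε := by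
        rcases lt_or_eq_of_le (hg0 x₀) with h | h
        · exact h
        · exfalso
          have hB0 : Bᴴ *ᵥ x₀ = 0 := hgz x₀ h.symm
          have := hneg x₀ hB0 (hSne x₀ hx₀K.1)
          exact absurd hx₀K.2 (not_le.mpr this)
      obtain ⟨x₁, hx₁S, hx₁max⟩ := hS.exists_isMaxOn ⟨x₀, hx₀K.1⟩ (hf.continuousOn)
      set C := f x₁ with hC_def
      have hC0 : 0 ≤ C := le_trans hx₀K.2 (hx₁max hx₀K.1)
      refine ⟨(C + 1) / ε, by positivity, fun x hx => ?_⟩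
      by_cases hfx : 0 ≤ f x
      · have hxK : x ∈ K := ⟨hx, hfx⟩
        have h1 : ε ≤ g x := hx₀min hxK
        have h2 : f x ≤ C := hx₁max hx
        have h3 : (C + 1) / ε * ε = C + 1 := div_mul_cancel₀ _ (ne_of_gt hε)
        nlinarith [hg0 x]
      · have h1 : f x < 0 := lt_of_not_ge hfx
        have h2 : 0 ≤ (C + 1) / ε * g x := mul_nonneg (by positivity) (hg0 x)
        linarith
  obtain ⟨μ, hμ, hsph⟩ := key
  refine ⟨μ, hμ, fun x hx => ?_⟩
  set c : ℝ := ‖x‖⁻¹ with hc_def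
  have hc : 0 < c := inv_pos.mpr (norm_pos_iff.mpr hx)
  have hy : ((c : ℂ) • x) ∈ Metric.sphere (0 : n → ℂ) 1 := by
    rw [mem_sphere_zero_iff_norm, norm_smul]
    simp [hc_def, norm_ne_zero_iff.mpr hx]
  have := hsph _ hy
  rw [hf_def, hg_def] at *
  simp only [aux_quad_smul] at this
  have hcc : 0 < c * c := mul_pos hc hc
  nlinarith

end Aux

/-- Equivalence (b) ⟺ (c) in the scaled-stabilizability theorem, via Finsler's
lemma: there is a positive definite block-diagonal `P` with
`B₂⊥ (A P A* - P) B₂⊥* < 0` iff there are `μ > 0` and a positive definite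
block-diagonal `P'` with `A P' A* - P' - μ B₂ B₂* < 0`.  Here `B₂⊥` is a matrix
such that `B₂⊥ᴴ` is injective with range `ker B₂ᴴ`. -/
theorem scaled_stabilizable_LMI_equiv {n m k : Type*} [Fintype n] [Fintype m]
    [Fintype k] {d : ℕ} (π : n → Fin d)
    (A : Matrix n n ℂ) (B₂ : Matrix n m ℂ) (Bp : Matrix k n ℂ)
    (hinj : Function.Injective Bpᴴ.mulVecLin)
    (hrange : LinearMap.range Bpᴴ.mulVecLin = LinearMap.ker B₂ᴴ.mulVecLin) :
    (∃ P : Matrix n n ℂ, (∀ i j, π i ≠ π j → P i j = 0) ∧ P.PosDef ∧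
        (-(Bp * (A * P * Aᴴ - P) * Bpᴴ)).PosDef) ↔
      (∃ μ : ℝ, 0 < μ ∧ ∃ P' : Matrix n n ℂ,
        (∀ i j, π i ≠ π j → P' i j = 0) ∧ P'.PosDef ∧
        (-(A * P' * Aᴴ - P' - (μ : ℂ) • (B₂ * B₂ᴴ))).PosDef) := by
  constructor
  · rintro ⟨P, hPd, hPpos, hLMI⟩
    set H := A * P * Aᴴ - P with hH_def
    have hH : H.IsHermitian := by
      rw [Matrix.IsHermitian, hH_def]
      simp [conjTranspose_sub, conjTranspose_mul, Matrix.mul_assoc, hPpos.1.eq]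
    have hneg : ∀ x : n → ℂ, B₂ᴴ *ᵥ x = 0 → x ≠ 0 → (star x ⬝ᵥ H *ᵥ x).re < 0 := by
      intro x hBx hx
      have hxker : x ∈ LinearMap.ker B₂ᴴ.mulVecLin := by
        simpa [Matrix.mulVecLin_apply] using hBx
      rw [← hrange] at hxker
      obtain ⟨y, hy⟩ := hxker
      rw [Matrix.mulVecLin_apply] at hy
      have hy0 : y ≠ 0 := by
        rintro rfl
        rw [Matrix.mulVec_zero] at hy
        exact hx hy.symm
      have hq : star x ⬝ᵥ H *ᵥ x = star y ⬝ᵥ (Bp * H * Bpᴴ) *ᵥ y := by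
        rw [← hy]; exact aux_quad_congr H Bp y
      have := hLMI.dotProduct_mulVec_pos hy0
      rw [Complex.pos_iff] at this
      have hre : 0 < (star y ⬝ᵥ (-(Bp * H * Bpᴴ)) *ᵥ y).re := this.1
      rw [neg_mulVec, dotProduct_neg, Complex.neg_re] at hre
      rw [hq]; linarith
    obtain ⟨μ, hμ, hfin⟩ := aux_finsler H B₂ hneg
    refine ⟨μ, hμ, P, hPd, hPpos, ?_⟩
    have hHerm : (-(H - (μ : ℂ) • (B₂ * B₂ᴴ))).IsHermitian := by
      rw [Matrix.IsHermitian]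
      simp [conjTranspose_neg, conjTranspose_sub, conjTranspose_smul, hH.eq,
        conjTranspose_mul, Complex.star_def, Complex.conj_ofReal, Matrix.mul_assoc]
    refine Matrix.PosDef.of_dotProduct_mulVec_pos hHerm fun x hx => ?_
    rw [Complex.pos_iff]
    constructor
    · rw [aux_quad_sub_smul]
      have := hfin x hx
      linarith
    · exact (aux_quad_im_zero hHerm x).symm
  · rintro ⟨μ, hμ, P, hPd, hPpos, hLMI⟩
    refine ⟨P, hPd, hPpos, ?_⟩
    set H := A * P * Aᴴ - P with hH_def
    have hH : H.IsHermitian := by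
      rw [Matrix.IsHermitian, hH_def]
      simp [conjTranspose_sub, conjTranspose_mul, Matrix.mul_assoc, hPpos.1.eq]
    have hHerm : (-(Bp * H * Bpᴴ)).IsHermitian := by
      rw [Matrix.IsHermitian]
      simp [conjTranspose_neg, conjTranspose_mul, hH.eq, Matrix.mul_assoc]
    refine Matrix.PosDef.of_dotProduct_mulVec_pos hHerm fun y hy => ?_
    set x := Bpᴴ *ᵥ y with hx_def
    have hx0 : x ≠ 0 := by
      intro h0
      apply hy
      apply hinj
      simpa [Matrix.mulVecLin_apply, ← hx_def] using h0
    have hxker : B₂ᴴ *ᵥ x = 0 := by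
      have : x ∈ LinearMap.range Bpᴴ.mulVecLin := ⟨y, by simp [Matrix.mulVecLin_apply, hx_def]⟩
      rw [hrange] at this
      simpa [Matrix.mulVecLin_apply] using this
    have hBB : (B₂ * B₂ᴴ) *ᵥ x = 0 := by
      rw [← Matrix.mulVec_mulVec, hxker, Matrix.mulVec_zero]
    have hpos := hLMI.dotProduct_mulVec_pos hx0
    rw [Complex.pos_iff] at hpos
    have hre : (star x ⬝ᵥ H *ᵥ x).re < 0 := by
      have h1 := hpos.1
      rw [aux_quad_sub_smul] at h1
      have h2 : (star x ⬝ᵥ (B₂ * B₂ᴴ) *ᵥ x).re = 0 := by rw [hBB]; simp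
      rw [h2] at h1; linarith
    rw [Complex.pos_iff]
    constructor
    · have hq : star y ⬝ᵥ (Bp * H * Bpᴴ) *ᵥ y = star x ⬝ᵥ H *ᵥ x := by
        rw [hx_def]; exact (aux_quad_congr H Bp y).symm
      rw [neg_mulVec, dotProduct_neg, Complex.neg_re, hq]
      linarith
    · exact (aux_quad_im_zero hHerm y).symm
end
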